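/- Let X = 𝕋² = (ℝ/ℤ)² and let σ be a topological measure on X which is invariant under all translations of X. Let k, l be coprime integers, φ(p,q) = l·p − k·q, let α ∈ (0,1), and let A = φ⁻¹(π([0, α])) be the closed linear annulus of slope (k,l) and area α. Then σ(A) = α; that is, the value of σ on any closed linear annulus equals its area. -/

import Mathlib

/-!
The linear form `φ(p, q) = l p - k q` is a continuous homomorphism `𝕋² → 𝕋`, surjective because
`k` and `l` are coprime, so `B ↦ σ (φ⁻¹ B)` is a translation-invariant topological measure on the
circle, and the annulus is the preimage of the arc `π [0, α]`. On the circle, two disjoint closed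
arcs of lengths `α` and `β < 1 - α` show that the arc of length `α` has measure at most `α`.
Conversely, `n` equally spaced arcs of length slightly below `1/n`, together with the `n` open
gaps between them, cover the circle; as a topological measure is subadditive on disjoint open
sets and the gaps are short, such an arc has measure nearly `1/n`, and `⌊α n⌋` of them fit
disjointly into an arc of length `α`.
-/

/-- A topological measure (Aarnes) on a compact Hausdorff space `Z`. -/
structure IsTopMeasure {Z : Type*} [TopologicalSpace Z] (τ : Set Z → ℝ) : Prop where
  mem_Icc : ∀ A : Set Z, IsOpen A ∨ IsClosed A → τ A ∈ Set.Icc (0 : ℝ) 1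
  univ : τ Set.univ = 1
  compl_add : ∀ K : Set Z, IsCompact K → τ Kᶜ + τ K = 1
  add : ∀ K K' : Set Z, IsCompact K → IsCompact K' → Disjoint K K' →
      τ (K ∪ K') = τ K + τ K'
  mono : ∀ K K' : Set Z, IsCompact K → IsCompact K' → K ⊆ K' → τ K ≤ τ K'
  inner_reg : ∀ U : Set Z, IsOpen U →
      IsLUB {r : ℝ | ∃ K : Set Z, IsCompact K ∧ K ⊆ U ∧ τ K = r} (τ U)

/-- The two-dimensional torus `𝕋² = (ℝ/ℤ)²`. -/
abbrev Torus2 := UnitAddCircle × UnitAddCircle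

open Set

namespace IsTopMeasure

variable {Z : Type*} [TopologicalSpace Z] {τ : Set Z → ℝ}

theorem measure_empty (hτ : IsTopMeasure τ) : τ ∅ = 0 := by
  have := hτ.add ∅ ∅ isCompact_empty isCompact_empty (disjoint_empty _)
  rw [union_empty] at this
  linarith

theorem measure_le_of_isCompact_subset (hτ : IsTopMeasure τ) {K U : Set Z} (hK : IsCompact K)
    (hU : IsOpen U) (hKU : K ⊆ U) : τ K ≤ τ U :=
  (hτ.inner_reg U hU).1 ⟨K, hK, hKU, rfl⟩

theorem measure_le_of_subset_isCompact (hτ : IsTopMeasure τ) {U K : Set Z} (hU : IsOpen U)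
    (hK : IsCompact K) (hUK : U ⊆ K) : τ U ≤ τ K :=
  (hτ.inner_reg U hU).2 fun _ ⟨K', hK', hK'U, hr⟩ => hr ▸ hτ.mono K' K hK' hK (hK'U.trans hUK)

theorem measure_mono_of_isOpen (hτ : IsTopMeasure τ) {U V : Set Z} (hU : IsOpen U)
    (hV : IsOpen V) (hUV : U ⊆ V) : τ U ≤ τ V :=
  (hτ.inner_reg U hU).mono (hτ.inner_reg V hV) fun _ ⟨K, hK, hKU, hr⟩ => ⟨K, hK, hKU.trans hUV, hr⟩

theorem measure_biUnion_finset_of_isCompact (hτ : IsTopMeasure τ) {ι : Type*} {s : Finset ι}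
    {K : ι → Set Z} (hK : ∀ i ∈ s, IsCompact (K i)) (hd : (s : Set ι).PairwiseDisjoint K) :
    τ (⋃ i ∈ s, K i) = ∑ i ∈ s, τ (K i) := by
  classical
  induction s using Finset.induction_on with
  | empty => simpa using hτ.measure_empty
  | insert a s ha ih =>
    rw [Finset.coe_insert, pairwiseDisjoint_insert_of_notMem ha] at hd
    have hKs : ∀ i ∈ s, IsCompact (K i) := fun i hi => hK i (Finset.mem_insert_of_mem hi)
    rw [Finset.set_biUnion_insert, Finset.sum_insert ha, ← ih hKs hd.1]
    exact hτ.add _ _ (hK a (Finset.mem_insert_self a s)) (s.isCompact_biUnion hKs)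
      (disjoint_iUnion₂_right.2 hd.2)

/-- Topological measures are subadditive on disjoint open sets: a compact subset of `U ∪ V`
splits into the disjoint compact sets `K \ V ⊆ U` and `K \ U ⊆ V`. -/
theorem measure_union_le_of_isOpen (hτ : IsTopMeasure τ) {U V : Set Z} (hU : IsOpen U)
    (hV : IsOpen V) (hUV : Disjoint U V) : τ (U ∪ V) ≤ τ U + τ V := by
  refine (hτ.inner_reg _ (hU.union hV)).2 ?_
  rintro _ ⟨K, hK, hKUV, rfl⟩
  have hsplit : (K \ V) ∪ (K \ U) = K := by
    rw [← sdiff_inter, hUV.symm.inter_eq, sdiff_empty]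
  have hdisj : Disjoint (K \ V) (K \ U) :=
    disjoint_left.2 fun x ⟨hxK, hxV⟩ ⟨_, hxU⟩ => (hKUV hxK).elim hxU hxV
  rw [← hsplit, hτ.add _ _ (hK.diff hV) (hK.diff hU) hdisj]
  gcongr
  · exact hτ.measure_le_of_isCompact_subset (hK.diff hV) hU fun x ⟨hxK, hxV⟩ =>
      (hKUV hxK).resolve_right hxV
  · exact hτ.measure_le_of_isCompact_subset (hK.diff hU) hV fun x ⟨hxK, hxU⟩ =>
      (hKUV hxK).resolve_left hxU

theorem measure_biUnion_finset_le_of_isOpen (hτ : IsTopMeasure τ) {ι : Type*} {s : Finset ι}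
    {U : ι → Set Z} (hU : ∀ i ∈ s, IsOpen (U i)) (hd : (s : Set ι).PairwiseDisjoint U) :
    τ (⋃ i ∈ s, U i) ≤ ∑ i ∈ s, τ (U i) := by
  classical
  induction s using Finset.induction_on with
  | empty => simp [hτ.measure_empty]
  | insert a s ha ih =>
    rw [Finset.coe_insert, pairwiseDisjoint_insert_of_notMem ha] at hd
    have hUs : ∀ i ∈ s, IsOpen (U i) := fun i hi => hU i (Finset.mem_insert_of_mem hi)
    rw [Finset.set_biUnion_insert, Finset.sum_insert ha]
    calc τ (U a ∪ ⋃ i ∈ s, U i) ≤ τ (U a) + τ (⋃ i ∈ s, U i) :=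
          hτ.measure_union_le_of_isOpen (hU a (Finset.mem_insert_self a s))
            (isOpen_biUnion hUs) (disjoint_iUnion₂_right.2 hd.2)
      _ ≤ τ (U a) + ∑ i ∈ s, τ (U i) := by gcongr; exact ih hUs hd.1

theorem comap {X Y : Type*} [TopologicalSpace X] [CompactSpace X] [TopologicalSpace Y]
    [T2Space Y] {τ : Set X → ℝ} (hτ : IsTopMeasure τ) {f : X → Y} (hf : Continuous f) :
    IsTopMeasure fun B => τ (f ⁻¹' B) where
  mem_Icc B hB := hτ.mem_Icc _ (hB.imp (·.preimage hf) (·.preimage hf))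
  univ := hτ.univ
  compl_add K hK := hτ.compl_add _ (hK.preimage_continuous hf)
  add K K' hK hK' hKK' := hτ.add _ _ (hK.preimage_continuous hf) (hK'.preimage_continuous hf)
    (hKK'.preimage f)
  mono K K' hK hK' hKK' := hτ.mono _ _ (hK.preimage_continuous hf) (hK'.preimage_continuous hf)
    (preimage_mono hKK')
  inner_reg U hU := by
    refine ⟨fun _ ⟨K, hK, hKU, hr⟩ => hr ▸ hτ.measure_le_of_isCompact_subset
      (hK.preimage_continuous hf) (hU.preimage hf) (preimage_mono hKU), fun b hb => ?_⟩
    refine (hτ.inner_reg _ (hU.preimage hf)).2 ?_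
    rintro _ ⟨K, hK, hKU, rfl⟩
    calc τ K ≤ τ (f ⁻¹' (f '' K)) := hτ.mono _ _ hK
          ((hK.image hf).preimage_continuous hf) (subset_preimage_image f K)
      _ ≤ b := hb ⟨f '' K, hK.image hf, image_subset_iff.2 hKU, rfl⟩

end IsTopMeasure

def IsTranslationInvariant {G : Type*} [TopologicalSpace G] [Add G] (τ : Set G → ℝ) : Prop :=
  ∀ v : G, ∀ A : Set G, IsOpen A ∨ IsClosed A → τ ((fun x => x + v) '' A) = τ A

theorem IsTranslationInvariant.comap {G H : Type*} [TopologicalSpace G] [AddGroup G]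
    [TopologicalSpace H] [AddGroup H] {τ : Set G → ℝ} (hτ : IsTranslationInvariant τ)
    {f : G →+ H} (hf : Continuous f) (hsurj : Function.Surjective f) :
    IsTranslationInvariant fun B => τ (f ⁻¹' B) := by
  intro c B hB
  obtain ⟨v, rfl⟩ := hsurj c
  have hpre : f ⁻¹' ((fun y => y + f v) '' B) = (fun x => x + v) '' (f ⁻¹' B) := by
    simp only [image_add_right, ← preimage_comp]
    congr 1
    ext x
    simp
  dsimp only
  rw [hpre]
  exact hτ v _ (hB.imp (·.preimage hf) (·.preimage hf))

/-- The form `φ` whose fibres are the lines of slope `(k, l)`. -/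
def annulusHom (k l : ℤ) : Torus2 →+ UnitAddCircle :=
  l • AddMonoidHom.fst _ _ - k • AddMonoidHom.snd _ _

theorem continuous_annulusHom (k l : ℤ) : Continuous (annulusHom k l) :=
  ((continuous_zsmul l).comp continuous_fst).sub ((continuous_zsmul k).comp continuous_snd)

theorem annulusHom_surjective {k l : ℤ} (hkl : IsCoprime k l) :
    Function.Surjective (annulusHom k l) := by
  obtain ⟨a, b, hab⟩ := hkl
  intro c
  refine ⟨(b • c, -(a • c)), ?_⟩
  simp only [annulusHom, AddMonoidHom.sub_apply, AddMonoidHom.smul_apply, AddMonoidHom.coe_fst,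
    AddMonoidHom.coe_snd, smul_neg, sub_neg_eq_add, smul_smul, ← add_smul]
  rw [show l * b + k * a = 1 by linarith, one_smul]

theorem disjoint_Ico_nat_mul {d : ℝ} {i j : ℕ} (hij : i ≠ j) :
    Disjoint (Ico (i * d) (i * d + d)) (Ico (j * d) (j * d + d)) := by
  simpa [zsmul_eq_mul, add_mul] using
    pairwise_disjoint_Ico_add_zsmul (0 : ℝ) d (Nat.cast_injective.ne hij : (i : ℤ) ≠ j)

section Circle

local notation "π" => ((↑) : ℝ → UnitAddCircle)

namespace UnitAddCircle

theorem injOn_coe_Ico : InjOn π (Ico 0 1) := fun x hx y hy h =>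
  (AddCircle.coe_eq_coe_iff_of_mem_Ico (a := 0) (by simpa using hx) (by simpa using hy)).1 h

theorem disjoint_coe_image {S T : Set ℝ} (hS : S ⊆ Ico 0 1) (hT : T ⊆ Ico 0 1)
    (hST : Disjoint S T) : Disjoint (π '' S) (π '' T) := by
  rw [disjoint_iff_inter_eq_empty, ← injOn_coe_Ico.image_inter hS hT, hST.inter_eq, image_empty]

theorem pairwiseDisjoint_coe_image {n : ℕ} {d : ℝ} (hd : 0 ≤ d) (hnd : n * d ≤ 1)
    {S : ℕ → Set ℝ} (hS : ∀ i, S i ⊆ Ico (i * d) (i * d + d)) :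
    (Finset.range n : Set ℕ).PairwiseDisjoint fun i => π '' S i := by
  have hS01 : ∀ i ∈ (Finset.range n : Set ℕ), S i ⊆ Ico 0 1 := by
    intro i hi
    have hin : (i : ℝ) + 1 ≤ n := by exact_mod_cast Finset.mem_range.1 hi
    refine (hS i).trans (Ico_subset_Ico (by positivity) ?_)
    nlinarith
  exact fun i hi j hj hij =>
    disjoint_coe_image (hS01 i hi) (hS01 j hj) ((disjoint_Ico_nat_mul hij).mono (hS i) (hS j))

theorem compl_biUnion_coe_image_Icc_subset {n : ℕ} {d : ℝ} (hnd : n * d = 1) (s : ℝ) :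
    (⋃ i ∈ Finset.range n, π '' Icc (i * d) (i * d + s))ᶜ ⊆
      ⋃ i ∈ Finset.range n, π '' Ioo (i * d + s) (i * d + d) := by
  intro x hx
  obtain ⟨r, ⟨hr0, hr1⟩, rfl⟩ : x ∈ π '' Ico 0 (0 + 1) := by
    rw [AddCircle.coe_image_Ico_eq]
    exact mem_univ x
  have hd : 0 < d := by
    rcases n.eq_zero_or_pos with rfl | hn
    · simp at hnd
    · exact pos_of_mul_pos_right (hnd ▸ one_pos) (Nat.cast_nonneg n)
  set i := ⌊r / d⌋₊
  have hir : i * d ≤ r := (le_div_iff₀ hd).1 (Nat.floor_le (div_nonneg hr0 hd.le))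
  have hri : r < i * d + d := by
    have := Nat.lt_floor_add_one (r / d)
    rw [div_lt_iff₀ hd] at this
    linarith
  have hin : i < n := by
    rw [Nat.floor_lt (div_nonneg hr0 hd.le), div_lt_iff₀ hd, hnd]
    linarith
  have hsr : i * d + s < r := by
    by_contra! h
    exact hx (mem_biUnion (Finset.mem_range.2 hin) ⟨r, ⟨hir, h⟩, rfl⟩)
  exact mem_biUnion (Finset.mem_range.2 hin) ⟨r, ⟨hsr, hri⟩, rfl⟩

theorem isCompact_coe_image_Icc (t u : ℝ) : IsCompact (π '' Icc t u) :=
  isCompact_Icc.image (AddCircle.continuous_mk' 1)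

theorem isOpen_coe_image_Ioo (t u : ℝ) : IsOpen (π '' Ioo t u) :=
  QuotientAddGroup.isOpenMap_coe _ isOpen_Ioo

end UnitAddCircle

open UnitAddCircle

variable {τ : Set UnitAddCircle → ℝ}

theorem IsTranslationInvariant.measure_arc_shift (hinv : IsTranslationInvariant τ)
    (t a : ℝ) : τ (π '' Icc t (t + a)) = τ (π '' Icc 0 a) := by
  have h : π '' Icc t (t + a) = (fun y => y + π t) '' (π '' Icc 0 a) := by
    have hIcc : Icc t (t + a) = (fun x => x + t) '' Icc 0 a := by
      rw [image_add_const_Icc, zero_add, add_comm]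
    simp only [hIcc, image_image, AddCircle.coe_add]
  rw [h]
  exact hinv _ _ (Or.inr (isCompact_coe_image_Icc 0 a).isClosed)

namespace IsTopMeasure

theorem measure_arc_le_one (hτ : IsTopMeasure τ) (t u : ℝ) : τ (π '' Icc t u) ≤ 1 :=
  (hτ.mem_Icc _ (Or.inr (isCompact_coe_image_Icc t u).isClosed)).2

theorem measure_arc_nonneg (hτ : IsTopMeasure τ) (t u : ℝ) : 0 ≤ τ (π '' Icc t u) :=
  (hτ.mem_Icc _ (Or.inr (isCompact_coe_image_Icc t u).isClosed)).1

theorem natCast_mul_measure_arc_le (hτ : IsTopMeasure τ) (hinv : IsTranslationInvariant τ)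
    {n : ℕ} {s a : ℝ} (hs : 0 ≤ s) (hsa : n * s < a) (ha : a ≤ 1) :
    n * τ (π '' Icc 0 s) ≤ τ (π '' Icc 0 a) := by
  rcases n.eq_zero_or_pos with rfl | hn
  · simpa using hτ.measure_arc_nonneg 0 a
  have hn' : (0 : ℝ) < n := Nat.cast_pos.2 hn
  set d := a / n
  have hnd : n * d = a := mul_div_cancel₀ a hn'.ne'
  have hsd : s < d := by rw [lt_div_iff₀ hn']; linarith
  have hd : 0 ≤ d := hs.trans hsd.le
  set K : ℕ → Set UnitAddCircle := fun i => π '' Icc (i * d) (i * d + s)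
  have hK : ∀ i ∈ Finset.range n, IsCompact (K i) := fun i _ => isCompact_coe_image_Icc _ _
  have hdisj : (Finset.range n : Set ℕ).PairwiseDisjoint K :=
    pairwiseDisjoint_coe_image hd (hnd.le.trans ha)
      fun i => Icc_subset_Ico_right (by linarith)
  have hsub : (⋃ i ∈ Finset.range n, K i) ⊆ π '' Icc 0 a := by
    refine iUnion₂_subset fun i hi => image_mono (Icc_subset_Icc (by positivity) ?_)
    have hin : (i : ℝ) + 1 ≤ n := by exact_mod_cast Finset.mem_range.1 hi
    nlinarith
  calc n * τ (π '' Icc 0 s) = ∑ i ∈ Finset.range n, τ (K i) := by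
        simp [K, hinv.measure_arc_shift]
    _ = τ (⋃ i ∈ Finset.range n, K i) := (hτ.measure_biUnion_finset_of_isCompact hK hdisj).symm
    _ ≤ τ (π '' Icc 0 a) := hτ.mono _ _ ((Finset.range n).isCompact_biUnion hK)
        (isCompact_coe_image_Icc 0 a) hsub

/-- The complement of `n` equally spaced arcs of length `s` is covered by `n` gaps of length
`d - s`; since `τ` is subadditive on disjoint open sets, their measures add up to at least `1`. -/
theorem one_le_natCast_mul_measure_arc_add (hτ : IsTopMeasure τ)
    (hinv : IsTranslationInvariant τ) {n : ℕ} {s d : ℝ} (hnd : n * d = 1) (hs : 0 ≤ s)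
    (hsd : s < d) : 1 ≤ n * (τ (π '' Icc 0 s) + τ (π '' Icc 0 (d - s))) := by
  set K : ℕ → Set UnitAddCircle := fun i => π '' Icc (i * d) (i * d + s)
  set U : ℕ → Set UnitAddCircle := fun i => π '' Ioo (i * d + s) (i * d + d)
  have hK : ∀ i ∈ Finset.range n, IsCompact (K i) := fun i _ => isCompact_coe_image_Icc _ _
  have hU : ∀ i ∈ Finset.range n, IsOpen (U i) := fun i _ => isOpen_coe_image_Ioo _ _
  have hKdisj : (Finset.range n : Set ℕ).PairwiseDisjoint K :=
    pairwiseDisjoint_coe_image (hs.trans hsd.le) hnd.le fun i => Icc_subset_Ico_right (by linarith)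
  have hUdisj : (Finset.range n : Set ℕ).PairwiseDisjoint U :=
    pairwiseDisjoint_coe_image (hs.trans hsd.le) hnd.le fun i => Ioo_subset_Ico_self.trans
      (Ico_subset_Ico_left (by linarith))
  have hUle : ∀ i ∈ Finset.range n, τ (U i) ≤ τ (π '' Icc 0 (d - s)) := by
    intro i _
    rw [← hinv.measure_arc_shift (i * d + s), add_add_sub_cancel]
    exact hτ.measure_le_of_subset_isCompact (hU i ‹_›) (isCompact_coe_image_Icc _ _)
      (image_mono Ioo_subset_Icc_self)
  set C := ⋃ i ∈ Finset.range n, K i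
  have hC : IsCompact C := (Finset.range n).isCompact_biUnion hK
  calc 1 = τ Cᶜ + τ C := (hτ.compl_add C hC).symm
    _ ≤ τ (⋃ i ∈ Finset.range n, U i) + ∑ i ∈ Finset.range n, τ (K i) := by
        rw [hτ.measure_biUnion_finset_of_isCompact hK hKdisj]
        gcongr
        exact hτ.measure_mono_of_isOpen hC.isClosed.isOpen_compl (isOpen_biUnion hU)
          (compl_biUnion_coe_image_Icc_subset hnd s)
    _ ≤ ∑ i ∈ Finset.range n, τ (π '' Icc 0 (d - s)) +
          ∑ i ∈ Finset.range n, τ (π '' Icc 0 s) := by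
        gcongr
        · exact (hτ.measure_biUnion_finset_le_of_isOpen hU hUdisj).trans (Finset.sum_le_sum hUle)
        · exact (hinv.measure_arc_shift _ _).le
    _ = n * (τ (π '' Icc 0 s) + τ (π '' Icc 0 (d - s))) := by simp; ring

theorem measure_arc_add_measure_arc_le_one (hτ : IsTopMeasure τ)
    (hinv : IsTranslationInvariant τ) {a b : ℝ} (ha : 0 ≤ a) (hb : 0 ≤ b) (hab : a + b < 1) :
    τ (π '' Icc 0 a) + τ (π '' Icc 0 b) ≤ 1 := by
  set c := (1 + a - b) / 2 with hc
  have hdisj : Disjoint (π '' Icc 0 a) (π '' Icc c (c + b)) :=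
    disjoint_coe_image (Icc_subset_Ico_right (by linarith))
      (Icc_subset_Ico (by linarith) (by linarith))
      (disjoint_left.2 fun y hy hy' => by linarith [hy.2, hy'.1])
  rw [← hinv.measure_arc_shift c b, ← hτ.add _ _ (isCompact_coe_image_Icc _ _)
    (isCompact_coe_image_Icc _ _) hdisj]
  exact (hτ.mem_Icc _ (Or.inr ((isCompact_coe_image_Icc _ _).union
    (isCompact_coe_image_Icc _ _)).isClosed)).2

/-- `n²` arcs of length `d² / 2` fit into the circle, so `n` of them have measure at most `d`;
the `n` arcs of length `d - d² / 2` and their `n` gaps of length `d² / 2` have total measure at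
least `1`. -/
theorem sub_mul_self_le_measure_arc (hτ : IsTopMeasure τ) (hinv : IsTranslationInvariant τ)
    {n : ℕ} {d : ℝ} (hnd : n * d = 1) : d - d * d ≤ τ (π '' Icc 0 (d - d * d / 2)) := by
  have hn : (1 : ℝ) ≤ n := by
    rcases n.eq_zero_or_pos with rfl | hn
    · simp at hnd
    · exact_mod_cast hn
  have hd : 0 < d := pos_of_mul_pos_right (hnd ▸ one_pos) (Nat.cast_nonneg n)
  have hd1 : d ≤ 1 := by nlinarith
  set x := d * d / 2 with hx
  have hgap : n * τ (π '' Icc 0 x) ≤ d := by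
    have hpack := hτ.natCast_mul_measure_arc_le hinv (n := n * n) (s := x) (by positivity)
      (by push_cast; nlinarith) le_rfl
    have hle := hpack.trans (hτ.measure_arc_le_one 0 1)
    push_cast at hle
    nlinarith [hτ.measure_arc_nonneg 0 x]
  have hcover := hτ.one_le_natCast_mul_measure_arc_add hinv hnd (s := d - x) (by nlinarith)
    (by nlinarith)
  rw [sub_sub_cancel] at hcover
  nlinarith

theorem le_measure_arc (hτ : IsTopMeasure τ) (hinv : IsTranslationInvariant τ) {α : ℝ}
    (hα : α ≤ 1) : α ≤ τ (π '' Icc 0 α) := by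
  refine le_of_forall_pos_le_add fun ε hε => ?_
  rcases le_or_gt α 0 with hα0 | hα0
  · linarith [hτ.measure_arc_nonneg 0 α]
  obtain ⟨n, hn⟩ := exists_nat_gt (2 / ε)
  have hn0 : (0 : ℝ) < n := (div_pos two_pos hε).trans hn
  set d := (n : ℝ)⁻¹
  have hnd : n * d = 1 := mul_inv_cancel₀ hn0.ne'
  have hd : 0 < d := inv_pos.2 hn0
  have hd1 : d ≤ 1 := inv_le_one_of_one_le₀ (Nat.one_le_cast.2 (Nat.cast_pos.1 hn0))
  have hdε : 2 * d < ε := by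
    rw [div_lt_iff₀ hε] at hn
    nlinarith
  set s := d - d * d / 2 with hs_def
  have hs0 : 0 ≤ s := by nlinarith
  have hsd : s < d := by nlinarith
  set p := ⌊α * n⌋₊
  have hp : (p : ℝ) ≤ α * n := Nat.floor_le (by positivity)
  have hpd : α - d < p * d := by
    have := Nat.lt_floor_add_one (α * n)
    nlinarith
  have hps : p * s < α := by
    nlinarith [mul_le_mul_of_nonneg_right hp hs0, mul_lt_mul_of_pos_left hsd (mul_pos hα0 hn0)]
  have hpack := hτ.natCast_mul_measure_arc_le hinv hs0 hps hα
  have hs := hτ.sub_mul_self_le_measure_arc hinv hnd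
  calc α ≤ p * d - d + ε := by linarith
    _ ≤ p * (d - d * d) + ε := by nlinarith
    _ ≤ p * τ (π '' Icc 0 s) + ε := by gcongr
    _ ≤ τ (π '' Icc 0 α) + ε := by gcongr

theorem measure_arc_eq (hτ : IsTopMeasure τ) (hinv : IsTranslationInvariant τ)
    {α : ℝ} (hα0 : 0 ≤ α) (hα1 : α ≤ 1) : τ (π '' Icc 0 α) = α := by
  refine le_antisymm (le_of_forall_gt_imp_ge_of_dense fun c hc => ?_) (hτ.le_measure_arc hinv hα1)
  rcases le_or_gt 1 c with hc1 | hc1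
  · exact (hτ.measure_arc_le_one 0 α).trans hc1
  · have := hτ.measure_arc_add_measure_arc_le_one hinv hα0 (sub_nonneg.2 hc1.le)
      (by linarith : α + (1 - c) < 1)
    linarith [hτ.le_measure_arc hinv (by linarith : 1 - c ≤ 1)]

end IsTopMeasure

end Circle

/-- The value of a translation-invariant topological measure on the torus on any
closed linear annulus equals the area of the annulus. -/
theorem topMeasure_annulus_eq_area (σ : Set Torus2 → ℝ) (hσ : IsTopMeasure σ)
    (hinv : ∀ v : Torus2, ∀ A : Set Torus2, IsOpen A ∨ IsClosed A →
      σ ((fun x => x + v) '' A) = σ A)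
    (k l : ℤ) (hkl : IsCoprime k l) (α : ℝ) (hα : α ∈ Set.Ioo (0 : ℝ) 1) :
    σ ((fun x : Torus2 => l • x.1 - k • x.2) ⁻¹'
        (((↑) : ℝ → UnitAddCircle) '' Set.Icc (0 : ℝ) α)) = α :=
  (hσ.comap (continuous_annulusHom k l)).measure_arc_eq
    (IsTranslationInvariant.comap hinv (continuous_annulusHom k l) (annulusHom_surjective hkl))
    hα.1.le hα.2.le
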